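/- Let t be a positive integer, r a positive integer, g ∈ {0,1}, and x, y integers. Set Ξ = 4(i√t + 1)·(x − i√t·y)^4 ∈ ℂ (so that Ξ = ξ(x,y)^4 and Ξ − η(x,y)^4 = 8·P_t(x,y)). Then both A*_{r,g}(Ξ, 8·P_t(x,y)) and B*_{r,g}(Ξ, 8·P_t(x,y)) are algebraic integers lying in the field ℚ(i√t) = ℚ(√−t). -/

import Mathlib

/-!
Write `w = i√t`, so that `w² = -t` and `Ξ = 4(w + 1)(x - wy)⁴` lies in `ℤ[w]`, whose elements are
algebraic integers of the form `a + bw`. In both `A*` and `B*`, the `m`-th term is a rational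
coefficient times a product of powers of `Ξ` and of `8P`, so it lies in `ℤ[w]` as soon as
`8ᵐ` clears the denominator of the coefficient. The second binomial coefficient is taken at an
integer, hence is an integer. The first is `C(a/4, m) = ∏ᵢ (a - 4i) / (4ᵐ m!)`, and
`m! ∣ 2ᵐ ∏ᵢ (a - 4i)`: the power of `2` in `m!` is at most `m`, and modulo the odd part of `m!`
the factor `4` is invertible, so `∏ᵢ (a - 4i)` is `4ᵐ` times a product of `m` consecutive integers
there.
-/

/-- The quartic form `P_t(x,y) = x^4 + 4t x^3 y - 6t x^2 y^2 - 4t^2 x y^3 + t^2 y^4`. -/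
def Pquartic (t x y : ℤ) : ℤ :=
  x ^ 4 + 4 * t * x ^ 3 * y - 6 * t * x ^ 2 * y ^ 2 - 4 * t ^ 2 * x * y ^ 3 + t ^ 2 * y ^ 4

/-- The generalized binomial coefficient `C(α, m) = α(α-1)⋯(α-m+1)/m!`. -/
noncomputable def genChoose (α : ℝ) (m : ℕ) : ℝ :=
  (∏ i ∈ Finset.range m, (α - i)) / m.factorial

/-- The homogenized polynomial
`A*_{r,g}(X,Y) = Σ_{m=0}^{r} C(r-g+1/4, m) C(2r-g-m, r-g) (-1)^m X^{r-m} Y^m`. -/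
noncomputable def AstarPoly (r g : ℕ) (X Y : ℂ) : ℂ :=
  ∑ m ∈ Finset.range (r + 1),
    ((genChoose ((r : ℝ) - g + 1/4) m *
      genChoose (2 * (r : ℝ) - g - m) (r - g) : ℝ) : ℂ) * (-1) ^ m * X ^ (r - m) * Y ^ m

/-- The homogenized polynomial
`B*_{r,g}(X,Y) = Σ_{m=0}^{r-g} C(r-1/4, m) C(2r-g-m, r) (-1)^m X^{r-g-m} Y^m`. -/
noncomputable def BstarPoly (r g : ℕ) (X Y : ℂ) : ℂ :=
  ∑ m ∈ Finset.range (r - g + 1),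
    ((genChoose ((r : ℝ) - 1/4) m *
      genChoose (2 * (r : ℝ) - g - m) r : ℝ) : ℂ) * (-1) ^ m * X ^ (r - g - m) * Y ^ m

open Finset Nat

theorem factorial_dvd_prod_range_sub (b : ℤ) (m : ℕ) :
    (m ! : ℤ) ∣ ∏ i ∈ range m, (b - i) := by
  rw [← descPochhammer_eval_eq_prod_range, Polynomial.eval_eq_smeval,
    Ring.descPochhammer_eq_factorial_smul_choose, nsmul_eq_mul]
  exact dvd_mul_right _ _

theorem dvd_prod_range_sub_mul_of_isCoprime {a c : ℤ} {q m : ℕ} (hcq : IsCoprime c q)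
    (hq : q ∣ m !) : (q : ℤ) ∣ ∏ i ∈ range m, (a - c * i) := by
  obtain ⟨u, v, huv⟩ := hcq
  have hu : (u * c : ZMod q) = 1 := by
    simpa using congrArg (Int.cast : ℤ → ZMod q) huv
  have hprod : ((∏ i ∈ range m, (a - c * i) : ℤ) : ZMod q) =
      c ^ m * ((∏ i ∈ range m, (u * a - i) : ℤ) : ZMod q) := by
    push_cast
    calc ∏ i ∈ range m, ((a : ZMod q) - c * i)
        = ∏ i ∈ range m, ((c : ZMod q) * (u * a - i)) :=
          prod_congr rfl fun i _ => by linear_combination (-(a : ZMod q)) * hu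
      _ = c ^ m * ∏ i ∈ range m, ((u : ZMod q) * a - i) := by rw [← pow_card_mul_prod, card_range]
  rw [← ZMod.intCast_zmod_eq_zero_iff_dvd, hprod, (ZMod.intCast_zmod_eq_zero_iff_dvd _ q).2
    ((Int.natCast_dvd_natCast.2 hq).trans (factorial_dvd_prod_range_sub _ m)), mul_zero]

theorem factorial_dvd_prime_pow_mul_prod_range_sub {p : ℕ} (hp : p.Prime) (k : ℕ) (a : ℤ)
    (m : ℕ) : (m ! : ℤ) ∣ p ^ m * ∏ i ∈ range m, (a - p ^ k * i) := by
  have := Fact.mk hp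
  have hsplit := ordProj_mul_ordCompl_eq_self m ! p
  have hcop : IsCoprime ((p : ℤ) ^ k) (ordCompl[p] m ! : ℕ) := by
    exact_mod_cast Nat.isCoprime_iff_coprime.2
      ((coprime_ordCompl hp (factorial_ne_zero m)).pow_left k)
  have hval : (m !).factorization p ≤ m :=
    (factorization_def _ hp).trans_le (padicValNat_factorial_le p m)
  rw [← hsplit]
  push_cast
  exact mul_dvd_mul (pow_dvd_pow _ hval)
    (dvd_prod_range_sub_mul_of_isCoprime hcop (Dvd.intro_left _ hsplit))

theorem genChoose_intCast_mem_bot (b : ℤ) (k : ℕ) : genChoose b k ∈ (⊥ : Subring ℝ) :=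
  Subring.mem_bot.2 ⟨(∏ i ∈ range k, (b - i)) / k !, by
    rw [Int.cast_div (factorial_dvd_prod_range_sub b k) (by positivity)]
    push_cast
    rfl⟩

theorem pow_mul_genChoose_div (a c : ℤ) (hc : c ≠ 0) (m : ℕ) :
    (c : ℝ) ^ m * genChoose (a / c) m = ((∏ i ∈ range m, (a - c * i) : ℤ) : ℝ) / m ! := by
  have hprod := pow_card_mul_prod (s := range m) (f := fun i : ℕ ↦ (a : ℝ) / c - i) (b := (c : ℝ))
  rw [card_range] at hprod
  rw [genChoose, ← mul_div_assoc, hprod]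
  push_cast
  exact congrArg (· / _) (prod_congr rfl fun i _ ↦ by field_simp)

theorem eight_pow_mul_genChoose_quarter_mem_bot (a : ℤ) (m : ℕ) :
    8 ^ m * genChoose (a / 4) m ∈ (⊥ : Subring ℝ) := by
  have hdvd : (m ! : ℤ) ∣ 2 ^ m * ∏ i ∈ range m, (a - 4 * i) := by
    simpa using factorial_dvd_prime_pow_mul_prod_range_sub prime_two 2 a m
  refine Subring.mem_bot.2 ⟨_, (Int.cast_div hdvd (by positivity)).trans ?_⟩
  calc ((2 ^ m * ∏ i ∈ range m, (a - 4 * i) : ℤ) : ℝ) / (m ! : ℤ)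
      = 2 ^ m * (((4 : ℤ) : ℝ) ^ m * genChoose (a / (4 : ℤ)) m) := by
        rw [pow_mul_genChoose_div a 4 (by norm_num)]
        push_cast
        ring
    _ = 8 ^ m * genChoose (a / 4) m := by
        push_cast
        rw [← mul_assoc, ← mul_pow]
        norm_num

theorem ofReal_mul_pow_mul_eight_mul_pow_mem {S : Subring ℂ} {X : ℂ} (hX : X ∈ S) (P : ℤ)
    {c : ℝ} {m : ℕ} (hc : 8 ^ m * c ∈ (⊥ : Subring ℝ)) (j : ℕ) :
    (c : ℂ) * (-1) ^ m * X ^ j * ((8 * P : ℤ) : ℂ) ^ m ∈ S := by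
  obtain ⟨K, hK⟩ := Subring.mem_bot.1 hc
  have hterm : (c : ℂ) * (-1) ^ m * X ^ j * ((8 * P : ℤ) : ℂ) ^ m =
      K * (-1) ^ m * X ^ j * P ^ m := by
    have hK' : (K : ℂ) = 8 ^ m * c := by exact_mod_cast hK
    push_cast
    linear_combination (-(-1) ^ m * X ^ j * (P : ℂ) ^ m) * hK'
  rw [hterm]
  exact mul_mem (mul_mem (mul_mem (intCast_mem _ _) (pow_mem (neg_mem (one_mem _)) _))
    (pow_mem hX _)) (pow_mem (intCast_mem _ _) _)

theorem AstarPoly_mem {S : Subring ℂ} {X : ℂ} (hX : X ∈ S) (r g : ℕ) (P : ℤ) :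
    AstarPoly r g X ((8 * P : ℤ) : ℂ) ∈ S := by
  have hα : (r : ℝ) - g + 1 / 4 = ((4 * r - 4 * g + 1 : ℤ) : ℝ) / 4 := by push_cast; ring
  refine S.sum_mem fun m _ => ofReal_mul_pow_mul_eight_mul_pow_mem hX P ?_ _
  have hβ : 2 * (r : ℝ) - g - m = ((2 * r - g - m : ℤ) : ℝ) := by push_cast; ring
  rw [← mul_assoc, hα, hβ]
  exact mul_mem (eight_pow_mul_genChoose_quarter_mem_bot _ m) (genChoose_intCast_mem_bot _ _)

theorem BstarPoly_mem {S : Subring ℂ} {X : ℂ} (hX : X ∈ S) (r g : ℕ) (P : ℤ) :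
    BstarPoly r g X ((8 * P : ℤ) : ℂ) ∈ S := by
  have hα : (r : ℝ) - 1 / 4 = ((4 * r - 1 : ℤ) : ℝ) / 4 := by push_cast; ring
  refine S.sum_mem fun m _ => ofReal_mul_pow_mul_eight_mul_pow_mem hX P ?_ _
  have hβ : 2 * (r : ℝ) - g - m = ((2 * r - g - m : ℤ) : ℝ) := by push_cast; ring
  rw [← mul_assoc, hα, hβ]
  exact mul_mem (eight_pow_mul_genChoose_quarter_mem_bot _ m) (genChoose_intCast_mem_bot _ _)

theorem Zsqrtd.isIntegral_lift {R : Type*} [CommRing R] {d : ℤ} (w : {w : R // w * w = d})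
    (u : ℤ√d) : IsIntegral ℤ (Zsqrtd.lift w u) := by
  have hw : IsIntegral ℤ (w : R) :=
    IsIntegral.of_pow two_pos (by rw [sq, w.2]; exact isIntegral_intCast d)
  rw [Zsqrtd.lift_apply_apply]
  exact (isIntegral_intCast _).add ((isIntegral_intCast _).mul hw)

theorem Astar_Bstar_algebraic_integers_general (t : ℕ)
    (r : ℕ) (g : ℕ) (x y : ℤ)
    (Ξ : ℂ)
    (hΞ : Ξ = 4 * (Complex.I * (Real.sqrt t : ℂ) + 1) *
      ((x : ℂ) - Complex.I * (Real.sqrt t : ℂ) * (y : ℂ)) ^ 4) :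
    (IsIntegral ℤ (AstarPoly r g Ξ ((8 * Pquartic t x y : ℤ) : ℂ)) ∧
      ∃ a b : ℚ, AstarPoly r g Ξ ((8 * Pquartic t x y : ℤ) : ℂ) =
        (a : ℂ) + (b : ℂ) * (Complex.I * (Real.sqrt t : ℂ))) ∧
    (IsIntegral ℤ (BstarPoly r g Ξ ((8 * Pquartic t x y : ℤ) : ℂ)) ∧
      ∃ a b : ℚ, BstarPoly r g Ξ ((8 * Pquartic t x y : ℤ) : ℂ) =
        (a : ℂ) + (b : ℂ) * (Complex.I * (Real.sqrt t : ℂ))) := by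
  set w : ℂ := Complex.I * (Real.sqrt t : ℂ)
  have hw : w * w = ((-t : ℤ) : ℂ) := by
    rw [mul_mul_mul_comm, Complex.I_mul_I, ← Complex.ofReal_mul,
      Real.mul_self_sqrt (Nat.cast_nonneg t)]
    push_cast
    ring
  set S := (Zsqrtd.lift ⟨w, hw⟩).range
  have hwS : w ∈ S := ⟨Zsqrtd.sqrtd, by simp⟩
  have hΞS : Ξ ∈ S := by
    rw [hΞ]
    exact mul_mem (mul_mem (ofNat_mem S 4) (add_mem hwS (one_mem S)))
      (pow_mem (sub_mem (intCast_mem S x) (mul_mem hwS (intCast_mem S y))) 4)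
  have key : ∀ z ∈ S, IsIntegral ℤ z ∧ ∃ a b : ℚ, z = a + b * w := by
    rintro _ ⟨u, rfl⟩
    exact ⟨Zsqrtd.isIntegral_lift _ u, u.re, u.im, by simp⟩
  exact ⟨key _ (AstarPoly_mem hΞS r g _), key _ (BstarPoly_mem hΞS r g _)⟩

/-- With `Ξ = ξ(x,y)^4 = 4(i√t + 1)(x - i√t y)^4`, both
`A*_{r,g}(Ξ, 8 P_t(x,y))` and `B*_{r,g}(Ξ, 8 P_t(x,y))` are algebraic integers
lying in the imaginary quadratic field `ℚ(i√t) = ℚ(√-t)`. -/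
theorem Astar_Bstar_algebraic_integers (t : ℕ) (ht : 0 < t)
    (r : ℕ) (hr : 0 < r) (g : ℕ) (hg : g = 0 ∨ g = 1) (x y : ℤ)
    (Ξ : ℂ)
    (hΞ : Ξ = 4 * (Complex.I * (Real.sqrt t : ℂ) + 1) *
      ((x : ℂ) - Complex.I * (Real.sqrt t : ℂ) * (y : ℂ)) ^ 4) :
    (IsIntegral ℤ (AstarPoly r g Ξ ((8 * Pquartic t x y : ℤ) : ℂ)) ∧
      ∃ a b : ℚ, AstarPoly r g Ξ ((8 * Pquartic t x y : ℤ) : ℂ) =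
        (a : ℂ) + (b : ℂ) * (Complex.I * (Real.sqrt t : ℂ))) ∧
    (IsIntegral ℤ (BstarPoly r g Ξ ((8 * Pquartic t x y : ℤ) : ℂ)) ∧
      ∃ a b : ℚ, BstarPoly r g Ξ ((8 * Pquartic t x y : ℤ) : ℂ) =
        (a : ℂ) + (b : ℂ) * (Complex.I * (Real.sqrt t : ℂ))) :=
  Astar_Bstar_algebraic_integers_general t r g x y Ξ hΞ
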